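/- arXiv:1609.03328 — 2 statements merged into one kernel-verified Lean document; each statement's English description precedes it below -/
import Mathlib

section
/- For every integer m ≥ 1 there exist K > 0 and δ > 0 with K·δ^m < 1 such that if ‖x₀ − x*‖ ≤ δ, then the Shamanskii iterates x^{(j+1)} = S_m(x^{(j)}) are well defined for all j and the sequence (x^{(j)}) converges to x*. -/
/-!
The chord step `y ↦ y - J(x)⁻¹ F(y)`, with the Jacobian frozen at `x`, satisfies
`‖step y - x*‖ ≤ ‖J(x)⁻¹‖ γ (‖x - x*‖ + ‖y - x*‖) ‖y - x*‖`: write `F y = F y - F x*` and combine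
the first-order Taylor estimate at `x*` with the Lipschitz bound on `J`. Positive definiteness
makes `J(x*)` invertible, so `J(x)⁻¹` exists and stays bounded near `x*`; on a small ball every
chord step therefore halves the distance to `x*`. A Shamanskii step is `m ≥ 1` chord steps from
the same `x`, so it halves that distance too, and its iterates converge geometrically to `x*`.
-/

open scoped RealInnerProductSpace

/-- Inner (chord) iterates with frozen matrix `A`: `y₀ = x`, `y_{k+1} = y_k − A⁻¹ F(y_k)`.
If `A` is not invertible, `A.inverse = 0`. -/
noncomputable def chordIter {n : ℕ}
    (F : EuclideanSpace ℝ (Fin n) → EuclideanSpace ℝ (Fin n))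
    (A : EuclideanSpace ℝ (Fin n) →L[ℝ] EuclideanSpace ℝ (Fin n))
    (x : EuclideanSpace ℝ (Fin n)) : ℕ → EuclideanSpace ℝ (Fin n)
  | 0 => x
  | k + 1 => chordIter F A x k - A.inverse (F (chordIter F A x k))

/-- Shamanskii `m`-step map: `m` chord steps with the Jacobian frozen at `x`. -/
noncomputable def shamanskii {n : ℕ} (m : ℕ)
    (F : EuclideanSpace ℝ (Fin n) → EuclideanSpace ℝ (Fin n))
    (J : EuclideanSpace ℝ (Fin n) →
      (EuclideanSpace ℝ (Fin n) →L[ℝ] EuclideanSpace ℝ (Fin n)))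
    (x : EuclideanSpace ℝ (Fin n)) : EuclideanSpace ℝ (Fin n) :=
  chordIter F (J x) x m

open Filter Topology Metric Set

section Iterate

variable {X : Type*} [PseudoMetricSpace X] {g : X → X} {a x : X} {δ q : ℝ}

theorem mapsTo_closedBall_of_forall_dist_le (hq : q ≤ 1)
    (hg : ∀ y, dist y a ≤ δ → dist (g y) a ≤ q * dist y a) :
    MapsTo g (closedBall a δ) (closedBall a δ) := fun y hy =>
  (hg y hy).trans <| (mul_le_of_le_one_left dist_nonneg hq).trans hy

theorem dist_iterate_le_of_forall_dist_le (hq₀ : 0 ≤ q) (hq : q ≤ 1)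
    (hg : ∀ y, dist y a ≤ δ → dist (g y) a ≤ q * dist y a) (hx : dist x a ≤ δ) (k : ℕ) :
    dist (g^[k] x) a ≤ q ^ k * dist x a := by
  induction k with
  | zero => simp
  | succ k ih =>
    rw [Function.iterate_succ_apply', pow_succ', mul_assoc]
    exact (hg _ ((mapsTo_closedBall_of_forall_dist_le hq hg).iterate k hx)).trans
      (mul_le_mul_of_nonneg_left ih hq₀)

theorem tendsto_iterate_of_forall_dist_le (hq₀ : 0 ≤ q) (hq : q < 1)
    (hg : ∀ y, dist y a ≤ δ → dist (g y) a ≤ q * dist y a) (hx : dist x a ≤ δ) :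
    Tendsto (fun k => g^[k] x) atTop (𝓝 a) := by
  rw [tendsto_iff_dist_tendsto_zero]
  refine squeeze_zero (fun _ => dist_nonneg)
    (dist_iterate_le_of_forall_dist_le hq₀ hq.le hg hx) ?_
  simpa using (tendsto_pow_atTop_nhds_zero_of_lt_one hq₀ hq).mul_const (dist x a)

end Iterate

theorem ContinuousAt.eventually_isUnit_and_norm_inverse_lt {X R : Type*} [TopologicalSpace X]
    [NormedRing R] [HasSummableGeomSeries R] {f : X → R} {a : X}
    (hf : ContinuousAt f a) (ha : IsUnit (f a)) :
    ∀ᶠ x in 𝓝 a, IsUnit (f x) ∧ ‖Ring.inverse (f x)‖ < ‖Ring.inverse (f a)‖ + 1 := by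
  obtain ⟨u, hu⟩ := ha
  have hinv : ContinuousAt (fun x => ‖Ring.inverse (f x)‖) a :=
    ((hu ▸ NormedRing.inverse_continuousAt u).comp hf).norm
  exact (hf.eventually_mem (Units.isOpen.mem_nhds ⟨u, hu⟩)).and
    (hinv.eventually_lt continuousAt_const (lt_add_one _))

theorem ContinuousLinearMap.isUnit_of_inner_pos {E : Type*} [NormedAddCommGroup E]
    [InnerProductSpace ℝ E] [FiniteDimensional ℝ E] {A : E →L[ℝ] E}
    (hA : ∀ v, v ≠ 0 → 0 < ⟪v, A v⟫) : IsUnit A := by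
  rw [isUnit_iff_isUnit_toLinearMap, LinearMap.isUnit_iff_ker_eq_bot, LinearMap.ker_eq_bot']
  intro v hv
  rw [coe_coe] at hv
  by_contra hne
  simpa [hv] using hA v hne

theorem norm_image_sub_sub_le_of_norm_fderiv_sub_le {E G : Type*} [NormedAddCommGroup E]
    [NormedSpace ℝ E] [NormedAddCommGroup G] [NormedSpace ℝ G] {f : E → G} {f' : E → E →L[ℝ] G}
    {a : E} {γ : ℝ} (hf : ∀ x, HasFDerivAt f (f' x) x) (hγ : 0 ≤ γ)
    (hLip : ∀ x, ‖f' x - f' a‖ ≤ γ * ‖x - a‖) (y : E) :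
    ‖f y - f a - f' a (y - a)‖ ≤ γ * ‖y - a‖ * ‖y - a‖ := by
  refine (convex_segment a y).norm_image_sub_le_of_norm_hasFDerivWithin_le'
    (fun z _ => (hf z).hasFDerivWithinAt) (fun z hz => ?_)
    (left_mem_segment ℝ a y) (right_mem_segment ℝ a y)
  have hza : ‖z - a‖ ≤ ‖y - a‖ := by
    simp only [← dist_eq_norm, dist_comm _ a]
    linarith [dist_add_dist_of_mem_segment hz, dist_nonneg (x := z) (y := y)]
  exact (hLip z).trans (mul_le_mul_of_nonneg_left hza hγ)

section Chord

variable {E : Type*} [NormedAddCommGroup E] [NormedSpace ℝ E]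

noncomputable def chordStep (F : E → E) (A : E →L[ℝ] E) (y : E) : E := y - A.inverse (F y)

variable {F : E → E} {J : E → E →L[ℝ] E} {xs : E} {γ : ℝ}

theorem norm_chordStep_sub_le (hJ : ∀ x, HasFDerivAt F (J x) x) (hroot : F xs = 0)
    (hγ : 0 ≤ γ) (hLip : ∀ x y, ‖J x - J y‖ ≤ γ * ‖x - y‖) {x : E} (hx : IsUnit (J x))
    (y : E) :
    ‖chordStep F (J x) y - xs‖ ≤ ‖(J x).inverse‖ * (γ * (‖x - xs‖ + ‖y - xs‖) * ‖y - xs‖) := by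
  have hinv : ∀ v, (J x).inverse (J x v) = v := fun v => by
    have := congrArg (· v) (Ring.inverse_mul_cancel _ hx)
    rwa [ContinuousLinearMap.ringInverse_eq_inverse] at this
  have hstep : chordStep F (J x) y - xs =
      (J x).inverse ((J x - J xs) (y - xs) - (F y - F xs - J xs (y - xs))) := by
    simp only [chordStep, map_sub, sub_apply, hinv, hroot, map_zero]
    abel
  rw [hstep]
  refine ((J x).inverse.le_opNorm _).trans (mul_le_mul_of_nonneg_left ?_ (norm_nonneg _))
  calc _ ≤ ‖J x - J xs‖ * ‖y - xs‖ + γ * ‖y - xs‖ * ‖y - xs‖ :=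
        (norm_sub_le _ _).trans (add_le_add ((J x - J xs).le_opNorm _)
          (norm_image_sub_sub_le_of_norm_fderiv_sub_le hJ hγ (fun z => hLip z xs) y))
    _ ≤ γ * ‖x - xs‖ * ‖y - xs‖ + γ * ‖y - xs‖ * ‖y - xs‖ := by gcongr; exact hLip x xs
    _ = _ := by ring

theorem exists_forall_dist_chordStep_le [CompleteSpace E] (hJ : ∀ x, HasFDerivAt F (J x) x)
    (hroot : F xs = 0) (hγ : 0 < γ) (hLip : ∀ x y, ‖J x - J y‖ ≤ γ * ‖x - y‖)
    (hxs : IsUnit (J xs)) :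
    ∃ δ > 0, ∀ x, dist x xs ≤ δ → IsUnit (J x) ∧
      ∀ y, dist y xs ≤ δ → dist (chordStep F (J x) y) xs ≤ 2⁻¹ * dist y xs := by
  have hJc : Continuous J :=
    (LipschitzWith.of_dist_le' (K := γ) (by simpa only [dist_eq_norm] using hLip)).continuous
  obtain ⟨ε, hε, hball⟩ :=
    eventually_nhds_iff_ball.mp (hJc.continuousAt.eventually_isUnit_and_norm_inverse_lt hxs)
  set C := ‖Ring.inverse (J xs)‖ + 1
  have hC : 0 < C := by positivity
  refine ⟨min (ε / 2) (4 * C * γ)⁻¹, by positivity, fun x hx => ?_⟩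
  obtain ⟨hunit, hnorm⟩ := hball x (hx.trans_lt ((min_le_left _ _).trans_lt (half_lt_self hε)))
  refine ⟨hunit, fun y hy => ?_⟩
  rw [ContinuousLinearMap.ringInverse_eq_inverse] at hnorm
  simp only [dist_eq_norm] at hx hy ⊢
  have hfactor : ‖(J x).inverse‖ * (γ * (‖x - xs‖ + ‖y - xs‖)) ≤ 2⁻¹ :=
    calc _ ≤ C * (γ * (2 * (4 * C * γ)⁻¹)) := by
          gcongr
          linarith [min_le_right (ε / 2) (4 * C * γ)⁻¹]
      _ = 2⁻¹ := by field_simp; norm_num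
  calc _ ≤ _ := norm_chordStep_sub_le hJ hroot hγ.le hLip hunit y
    _ = ‖(J x).inverse‖ * (γ * (‖x - xs‖ + ‖y - xs‖)) * ‖y - xs‖ := by ring
    _ ≤ _ := by gcongr

end Chord

theorem chordIter_eq_iterate {n : ℕ} (F : EuclideanSpace ℝ (Fin n) → EuclideanSpace ℝ (Fin n))
    (A : EuclideanSpace ℝ (Fin n) →L[ℝ] EuclideanSpace ℝ (Fin n))
    (x : EuclideanSpace ℝ (Fin n)) (k : ℕ) : chordIter F A x k = (chordStep F A)^[k] x := by
  induction k with
  | zero => rfl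
  | succ k ih => rw [Function.iterate_succ_apply', ← ih]; rfl

theorem shamanskii_convergence (n : ℕ)
    (F : EuclideanSpace ℝ (Fin n) → EuclideanSpace ℝ (Fin n))
    (J : EuclideanSpace ℝ (Fin n) →
      (EuclideanSpace ℝ (Fin n) →L[ℝ] EuclideanSpace ℝ (Fin n)))
    (hJ : ∀ x, HasFDerivAt F (J x) x)
    (xs : EuclideanSpace ℝ (Fin n)) (hroot : F xs = 0)
    (γ : ℝ) (hγ : 0 < γ)
    (hLip : ∀ x y, ‖J x - J y‖ ≤ γ * ‖x - y‖)
    (hpos : ∀ v : EuclideanSpace ℝ (Fin n), v ≠ 0 → 0 < ⟪v, (J xs) v⟫)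
    (m : ℕ) (hm : 1 ≤ m) :
    ∃ K > (0 : ℝ), ∃ δ > (0 : ℝ), K * δ ^ m < 1 ∧
      ∀ x₀ : EuclideanSpace ℝ (Fin n), ‖x₀ - xs‖ ≤ δ →
        (∀ j : ℕ, IsUnit (J ((shamanskii m F J)^[j] x₀))) ∧
        Filter.Tendsto (fun j => (shamanskii m F J)^[j] x₀) Filter.atTop (nhds xs) := by
  obtain ⟨δ, hδ, hchord⟩ := exists_forall_dist_chordStep_le hJ hroot hγ hLip
    (ContinuousLinearMap.isUnit_of_inner_pos hpos)
  have hsham : ∀ x, dist x xs ≤ δ → dist (shamanskii m F J x) xs ≤ 2⁻¹ * dist x xs := by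
    intro x hx
    rw [shamanskii, chordIter_eq_iterate]
    calc _ ≤ 2⁻¹ ^ m * dist x xs :=
          dist_iterate_le_of_forall_dist_le (by norm_num) (by norm_num) (hchord x hx).2 hx m
      _ ≤ 2⁻¹ * dist x xs := by
          gcongr
          exact pow_le_of_le_one (by norm_num) (by norm_num) (by omega)
  refine ⟨(δ ^ m)⁻¹ / 2, by positivity, δ, hδ, ?_, fun x₀ hx₀ => ?_⟩
  · rw [div_mul_eq_mul_div, inv_mul_cancel₀ (by positivity)]
    norm_num
  rw [← dist_eq_norm] at hx₀
  have hstay := (mapsTo_closedBall_of_forall_dist_le (by norm_num) hsham).iterate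
  exact ⟨fun j => (hchord _ (hstay j hx₀)).1,
    tendsto_iterate_of_forall_dist_le (by norm_num) (by norm_num) hsham hx₀⟩
end

section
/- There exist constants K > 0 and δ > 0 such that for every x with ‖x − x*‖ ≤ δ, the single Shamanskii step is well defined (J(x) is invertible and all inner iterates y₀, …, y_m remain in the ball of radius δ around x*) and satisfies ‖S_m(x) − x*‖ ≤ K‖x − x*‖^{m+1}. -/
/-! Positive definiteness makes `J x*` invertible, and by the Banach perturbation lemma `J x` stays
invertible with `‖J(x)⁻¹‖ ≤ 2B`, `B = ‖J(x*)⁻¹‖ + 1`, once `4Bγ‖x - x*‖ ≤ 1`. A chord step with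
the frozen Jacobian `J x` turns an error `e ≤ d = ‖x - x*‖` into at most
`‖J(x)⁻¹‖ (‖J x - J x*‖ e + γ e²) ≤ 4Bγ d e`, so `m` steps multiply `d` by `(4Bγd)^m`. -/

open scoped RealInnerProductSpace

theorem ContinuousLinearMap.isUnit_of_forall_inner_pos {E : Type*}
    [NormedAddCommGroup E] [InnerProductSpace ℝ E] [FiniteDimensional ℝ E] {T : E →L[ℝ] E}
    (hT : ∀ v, v ≠ 0 → 0 < ⟪v, T v⟫) : IsUnit T := by
  have hinj : Function.Injective T := by
    refine (injective_iff_map_eq_zero T).mpr fun v hv => ?_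
    by_contra hv0
    simpa [hv] using hT v hv0
  exact T.isUnit_iff_bijective.mpr
    ⟨hinj, LinearMap.injective_iff_surjective (f := (T : E →ₗ[ℝ] E)) |>.mp hinj⟩

theorem isUnit_and_norm_inverse_le_of_norm_sub_le {R : Type*} [NormedRing R]
    [HasSummableGeomSeries R] (hone : ‖(1 : R)‖ ≤ 1) {a b : R} (ha : IsUnit a) {M : ℝ}
    (hM : ‖Ring.inverse a‖ ≤ M) (hb : ‖b - a‖ ≤ (2 * M)⁻¹) :
    IsUnit b ∧ ‖Ring.inverse b‖ ≤ 2 * M := by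
  obtain ⟨u, rfl⟩ := ha
  rw [Ring.inverse_unit] at hM
  set t : R := -(↑u⁻¹ * (b - u))
  have ht : ‖t‖ ≤ 1 / 2 := by
    have hM0 : 0 ≤ M := (norm_nonneg _).trans hM
    calc ‖t‖ ≤ ‖(↑u⁻¹ : R)‖ * ‖b - u‖ := by rw [norm_neg]; exact norm_mul_le _ _
      _ ≤ M * (2 * M)⁻¹ := mul_le_mul hM hb (norm_nonneg _) hM0
      _ ≤ 1 / 2 := by
        rcases hM0.eq_or_lt with h | h
        · simp [← h]
        · field_simp; norm_num
  have ht1 : ‖t‖ < 1 := by linarith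
  have hfactor : b = ↑(u * Units.oneSub t ht1) := by
    simp [t, mul_sub, ← mul_assoc]
  have hgeom : ‖∑' n : ℕ, t ^ n‖ ≤ 2 := by
    have h := tsum_geometric_le_of_norm_lt_one t ht1
    have : (1 - ‖t‖)⁻¹ ≤ 2 := by
      rw [inv_le_comm₀ (by linarith) two_pos]; linarith
    linarith
  refine ⟨hfactor ▸ Units.isUnit _, ?_⟩
  rw [hfactor, Ring.inverse_unit, mul_inv_rev, Units.val_mul]
  calc ‖(↑(Units.oneSub t ht1)⁻¹ : R) * ↑u⁻¹‖
      ≤ ‖∑' n : ℕ, t ^ n‖ * ‖(↑u⁻¹ : R)‖ := norm_mul_le _ _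
    _ ≤ 2 * M := mul_le_mul hgeom hM (norm_nonneg _) zero_le_two

theorem norm_image_sub_sub_fderiv_le_of_lipschitz {E F : Type*}
    [NormedAddCommGroup E] [NormedSpace ℝ E] [NormedAddCommGroup F] [NormedSpace ℝ F]
    {f : E → F} {f' : E → E →L[ℝ] F} (hf : ∀ x, HasFDerivAt f (f' x) x)
    {γ : ℝ} (hγ : 0 ≤ γ) {p : E} (hLip : ∀ x, ‖f' x - f' p‖ ≤ γ * ‖x - p‖) (y : E) :
    ‖f y - f p - f' p (y - p)‖ ≤ γ * ‖y - p‖ ^ 2 := by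
  have bound : ∀ x ∈ Metric.closedBall p ‖y - p‖, ‖f' x - f' p‖ ≤ γ * ‖y - p‖ := fun x hx =>
    (hLip x).trans <| mul_le_mul_of_nonneg_left (mem_closedBall_iff_norm.mp hx) hγ
  calc ‖f y - f p - f' p (y - p)‖ ≤ γ * ‖y - p‖ * ‖y - p‖ :=
        (convex_closedBall p _).norm_image_sub_le_of_norm_hasFDerivWithin_le'
          (fun x _ => (hf x).hasFDerivWithinAt) bound (Metric.mem_closedBall_self (norm_nonneg _))
          (mem_closedBall_iff_norm.mpr le_rfl)
    _ = γ * ‖y - p‖ ^ 2 := by ring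

theorem ContinuousLinearMap.IsInvertible.norm_sub_inverse_apply_sub_le {E G : Type*}
    [NormedAddCommGroup E] [NormedSpace ℝ E] [NormedAddCommGroup G] [NormedSpace ℝ G]
    {A : E →L[ℝ] G} (hA : A.IsInvertible) (T : E →L[ℝ] G) {F : E → G} {xs : E}
    (hroot : F xs = 0) (y : E) :
    ‖y - A.inverse (F y) - xs‖ ≤
      ‖A.inverse‖ * (‖A - T‖ * ‖y - xs‖ + ‖F y - F xs - T (y - xs)‖) := by
  have hsplit : y - A.inverse (F y) - xs =
      A.inverse ((A - T) (y - xs) - (F y - F xs - T (y - xs))) := by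
    rw [hroot, map_sub, sub_apply, map_sub, hA.inverse_apply_self]
    simp only [sub_zero, map_sub]
    abel
  rw [hsplit]
  refine (A.inverse.le_opNorm _).trans (mul_le_mul_of_nonneg_left ?_ (norm_nonneg _))
  exact (norm_sub_le _ _).trans (add_le_add_left ((A - T).le_opNorm _) _)

theorem norm_chordStep_sub_le_of_lipschitz {E : Type*} [NormedAddCommGroup E] [NormedSpace ℝ E]
    {F : E → E} {J : E → E →L[ℝ] E} (hJ : ∀ x, HasFDerivAt F (J x) x) {xs : E}
    (hroot : F xs = 0) {γ : ℝ} (hγ : 0 ≤ γ) (hLip : ∀ x y, ‖J x - J y‖ ≤ γ * ‖x - y‖) {x : E}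
    (hx : IsUnit (J x)) {y : E} (hy : ‖y - xs‖ ≤ ‖x - xs‖) :
    ‖y - (J x).inverse (F y) - xs‖ ≤ 2 * ‖(J x).inverse‖ * γ * ‖x - xs‖ * ‖y - xs‖ := by
  have hinvertible : (J x).IsInvertible := by
    obtain ⟨v, hv⟩ := hx
    exact ⟨ContinuousLinearEquiv.unitsEquiv ℝ E v, hv⟩
  have htaylor := norm_image_sub_sub_fderiv_le_of_lipschitz hJ hγ (fun z => hLip z xs) y
  calc ‖y - (J x).inverse (F y) - xs‖
      ≤ ‖(J x).inverse‖ * (‖J x - J xs‖ * ‖y - xs‖ + ‖F y - F xs - J xs (y - xs)‖) :=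
        hinvertible.norm_sub_inverse_apply_sub_le (J xs) hroot y
    _ ≤ ‖(J x).inverse‖ * (γ * ‖x - xs‖ * ‖y - xs‖ + γ * ‖y - xs‖ ^ 2) := by
        gcongr
        exact hLip x xs
    _ ≤ 2 * ‖(J x).inverse‖ * γ * ‖x - xs‖ * ‖y - xs‖ := by
        have := mul_le_mul_of_nonneg_left hy
          (by positivity : 0 ≤ ‖(J x).inverse‖ * γ * ‖y - xs‖)
        linarith

theorem norm_chordIter_sub_le {n : ℕ} {F : EuclideanSpace ℝ (Fin n) → EuclideanSpace ℝ (Fin n)}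
    {A : EuclideanSpace ℝ (Fin n) →L[ℝ] EuclideanSpace ℝ (Fin n)}
    {x xs : EuclideanSpace ℝ (Fin n)} {q : ℝ} (hq0 : 0 ≤ q) (hq1 : q ≤ 1)
    (hstep : ∀ y, ‖y - xs‖ ≤ ‖x - xs‖ → ‖y - A.inverse (F y) - xs‖ ≤ q * ‖y - xs‖) (k : ℕ) :
    ‖chordIter F A x k - xs‖ ≤ q ^ k * ‖x - xs‖ := by
  induction k with
  | zero => simp [chordIter]
  | succ k ih =>
    have hle : ‖chordIter F A x k - xs‖ ≤ ‖x - xs‖ :=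
      ih.trans (mul_le_of_le_one_left (norm_nonneg _) (pow_le_one₀ hq0 hq1))
    calc ‖chordIter F A x (k + 1) - xs‖ ≤ q * ‖chordIter F A x k - xs‖ := hstep _ hle
      _ ≤ q * (q ^ k * ‖x - xs‖) := mul_le_mul_of_nonneg_left ih hq0
      _ = q ^ (k + 1) * ‖x - xs‖ := by ring

theorem shamanskii_single_step_general (n : ℕ)
    (F : EuclideanSpace ℝ (Fin n) → EuclideanSpace ℝ (Fin n))
    (J : EuclideanSpace ℝ (Fin n) →
      (EuclideanSpace ℝ (Fin n) →L[ℝ] EuclideanSpace ℝ (Fin n)))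
    (hJ : ∀ x, HasFDerivAt F (J x) x)
    (xs : EuclideanSpace ℝ (Fin n)) (hroot : F xs = 0)
    (γ : ℝ) (hγ : 0 < γ)
    (hLip : ∀ x y, ‖J x - J y‖ ≤ γ * ‖x - y‖)
    (hpos : ∀ v : EuclideanSpace ℝ (Fin n), v ≠ 0 → 0 < ⟪v, (J xs) v⟫)
    (m : ℕ) :
    ∃ K > (0 : ℝ), ∃ δ > (0 : ℝ),
      ∀ x : EuclideanSpace ℝ (Fin n), ‖x - xs‖ ≤ δ →
        IsUnit (J x) ∧
        (∀ k ≤ m, ‖chordIter F (J x) x k - xs‖ ≤ δ) ∧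
        ‖shamanskii m F J x - xs‖ ≤ K * ‖x - xs‖ ^ (m + 1) := by
  set B := ‖(J xs).inverse‖ + 1
  have hB : 0 < B := by positivity
  refine ⟨(4 * B * γ) ^ m, by positivity, (4 * B * γ)⁻¹, by positivity, fun x hx => ?_⟩
  set d := ‖x - xs‖
  have hq : 4 * B * γ * d ≤ 1 := by
    rwa [mul_comm, ← le_div_iff₀ (by positivity), one_div]
  have hJx : ‖J x - J xs‖ ≤ (2 * B)⁻¹ := by
    refine (hLip x xs).trans ?_
    rw [inv_eq_one_div, le_div_iff₀ (by positivity)]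
    linarith
  obtain ⟨hunit, hinv⟩ := isUnit_and_norm_inverse_le_of_norm_sub_le
    ContinuousLinearMap.norm_id_le ((J xs).isUnit_of_forall_inner_pos hpos)
    (by rw [ContinuousLinearMap.ringInverse_eq_inverse]; linarith) hJx
  rw [ContinuousLinearMap.ringInverse_eq_inverse] at hinv
  have hiter := norm_chordIter_sub_le (by positivity) hq fun y hy =>
    (norm_chordStep_sub_le_of_lipschitz hJ hroot hγ.le hLip hunit hy).trans
      (by gcongr ?_ * _ * _ * _; linarith)
  refine ⟨hunit, fun k _ => ?_, ?_⟩
  · exact (hiter k).trans <|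
      (mul_le_of_le_one_left (norm_nonneg _) (pow_le_one₀ (by positivity) hq)).trans hx
  · calc ‖shamanskii m F J x - xs‖ ≤ (4 * B * γ * d) ^ m * d := hiter m
      _ = (4 * B * γ) ^ m * d ^ (m + 1) := by rw [mul_pow, pow_succ]; ring

theorem shamanskii_single_step (n : ℕ)
    (F : EuclideanSpace ℝ (Fin n) → EuclideanSpace ℝ (Fin n))
    (J : EuclideanSpace ℝ (Fin n) →
      (EuclideanSpace ℝ (Fin n) →L[ℝ] EuclideanSpace ℝ (Fin n)))
    (hJ : ∀ x, HasFDerivAt F (J x) x)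
    (xs : EuclideanSpace ℝ (Fin n)) (hroot : F xs = 0)
    (γ : ℝ) (hγ : 0 < γ)
    (hLip : ∀ x y, ‖J x - J y‖ ≤ γ * ‖x - y‖)
    (hpos : ∀ v : EuclideanSpace ℝ (Fin n), v ≠ 0 → 0 < ⟪v, (J xs) v⟫)
    (m : ℕ) (hm : 1 ≤ m) :
    ∃ K > (0 : ℝ), ∃ δ > (0 : ℝ),
      ∀ x : EuclideanSpace ℝ (Fin n), ‖x - xs‖ ≤ δ →
        IsUnit (J x) ∧
        (∀ k ≤ m, ‖chordIter F (J x) x k - xs‖ ≤ δ) ∧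
        ‖shamanskii m F J x - xs‖ ≤ K * ‖x - xs‖ ^ (m + 1) :=
  shamanskii_single_step_general n F J hJ xs hroot γ hγ hLip hpos m
end
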